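/- Let n ≥ 4 and π ∈ ℒⁿ. Then s^{n−3}(π) = 2 3 1 4 5 ⋯ n, s^{n−2}(π) = 2 1 3 4 ⋯ n, and s^{n−1}(π) = 1 2 3 ⋯ n (the identity permutation); in particular the last three stack-sorting iterates are the same for every π ∈ ℒⁿ. -/

import Mathlib

open scoped Pointwise

/-- One pass of the stack-sorting algorithm: `ssAux stack input`, where
`stack` holds the current stack contents, top first.  If the next input
entry exceeds the top of the stack, the top is popped to the output;
otherwise the entry is pushed; at the end the stack is popped entirely. -/
def ssAux : List ℕ → List ℕ → List ℕ
  | stack, [] => stack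
  | [], x :: xs => ssAux [x] xs
  | t :: ts, x :: xs =>
    if t < x then t :: ssAux ts (x :: xs) else ssAux (x :: t :: ts) xs
termination_by stack inp => stack.length + 2 * inp.length

/-- The stack-sorting map `s`: one pass of the stack-sorting algorithm. -/
def stackSort (l : List ℕ) : List ℕ := ssAux [] l

/-- Auxiliary: the pair (output so far, final stack) of one stack-sorting pass. -/
def ssPair : List ℕ → List ℕ → List ℕ × List ℕ
  | stack, [] => ([], stack)
  | [], x :: xs => ssPair [x] xs
  | t :: ts, x :: xs =>
    if t < x then ((ssPair ts (x :: xs)).1.cons t, (ssPair ts (x :: xs)).2)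
    else ssPair (x :: t :: ts) xs
termination_by stack inp => stack.length + 2 * inp.length

theorem ssAux_eq_ssPair : ∀ S I : List ℕ, ssAux S I = (ssPair S I).1 ++ (ssPair S I).2 := by
  intro S I
  induction S, I using ssPair.induct with
  | case1 S => simp [ssAux, ssPair]
  | case2 x xs ih => rw [ssAux, ssPair]; exact ih
  | case3 t ts x xs h ih => rw [ssAux, ssPair, if_pos h, if_pos h]; simp [ih]
  | case4 t ts x xs h ih => rw [ssAux, ssPair, if_neg h, if_neg h]; exact ih

theorem ssPair_append : ∀ (S A B : List ℕ),
    ssPair S (A ++ B) = ((ssPair S A).1 ++ (ssPair (ssPair S A).2 B).1,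
      (ssPair (ssPair S A).2 B).2) := by
  intro S A B
  induction S, A using ssPair.induct with
  | case1 S => simp [ssPair]
  | case2 x xs ih => rw [List.cons_append, ssPair, ssPair]; exact ih
  | case3 t ts x xs h ih =>
      rw [List.cons_append, ssPair, ssPair, if_pos h, if_pos h]
      rw [List.cons_append] at ih
      rw [ih]
      simp
  | case4 t ts x xs h ih =>
      rw [List.cons_append, ssPair, ssPair, if_neg h, if_neg h]
      exact ih

theorem ssAux_perm : ∀ S I : List ℕ, (ssAux S I).Perm (S ++ I) := by
  intro S I
  induction S, I using ssPair.induct with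
  | case1 S => simp [ssAux]
  | case2 x xs ih =>
      rw [ssAux]
      simpa using ih
  | case3 t ts x xs h ih =>
      rw [ssAux, if_pos h]
      exact (ih.cons t).trans (by simp)
  | case4 t ts x xs h ih =>
      rw [ssAux, if_neg h]
      refine ih.trans ?_
      show (x :: ((t :: ts) ++ xs)).Perm ((t :: ts) ++ x :: xs)
      exact List.perm_middle.symm

theorem stackSort_perm (l : List ℕ) : (stackSort l).Perm l := by
  simpa [stackSort] using ssAux_perm [] l

theorem ssPair_single (x : ℕ) : ∀ S : List ℕ, (∀ t ∈ S, t < x) →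
    ssPair S [x] = (S, [x]) := by
  intro S
  induction S with
  | nil => intro _; rw [ssPair, ssPair]
  | cons t ts ih =>
      intro h
      rw [ssPair, if_pos (h t (by simp)), ih (fun a ha => h a (by simp [ha]))]

theorem ssPair_push (t : ℕ) (ts : List ℕ) (x : ℕ) (h : ¬ t < x) :
    ssPair (t :: ts) [x] = ([], x :: t :: ts) := by
  rw [ssPair, if_neg h, ssPair]

theorem ssPair_range : ∀ (k a : ℕ) (S : List ℕ), (∀ t ∈ S, t < a) →
    ssPair S (List.range' a (k + 1)) = (S ++ List.range' a k, [a + k]) := by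
  intro k
  induction k with
  | zero => intro a S h; simpa using ssPair_single a S h
  | succ k ih =>
      intro a S h
      have : List.range' a (k + 2) = [a] ++ List.range' (a + 1) (k + 1) := by
        simp [List.range'_succ]
      rw [this, ssPair_append, ssPair_single a S h]
      have h2 : ∀ t ∈ [a], t < a + 1 := by simp
      rw [ih (a + 1) [a] h2]
      have h3 : List.range' a (k + 1) = a :: List.range' (a + 1) k := List.range'_succ ..
      rw [h3]
      simp [Nat.add_assoc, Nat.add_comm 1 k]

theorem ssPair_bottom (m : ℕ) : ∀ (S I : List ℕ), (∀ x ∈ I, x < m) →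
    ssPair (S ++ [m]) I = ((ssPair S I).1, (ssPair S I).2 ++ [m]) := by
  intro S I
  induction S, I using ssPair.induct with
  | case1 S => intro _; rw [ssPair, ssPair]
  | case2 x xs ih =>
      intro h
      have hx : ¬ m < x := by have := h x (by simp); omega
      simp only [List.nil_append]
      rw [ssPair, ssPair, if_neg hx]
      have := ih (fun a ha => h a (by simp [ha]))
      simpa using this
  | case3 t ts x xs h ih =>
      intro hI
      rw [List.cons_append, ssPair, ssPair, if_pos h, if_pos h, ih hI]
  | case4 t ts x xs h ih =>
      intro hI
      rw [List.cons_append, ssPair, ssPair, if_neg h, if_neg h]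
      exact ih (fun a ha => hI a (by simp [ha]))

theorem ssPair_fst_append_snd (S I : List ℕ) :
    (ssPair S I).1 ++ (ssPair S I).2 = ssAux S I := (ssAux_eq_ssPair S I).symm

theorem mem_ssPair_snd {S I : List ℕ} {x : ℕ} (h : x ∈ (ssPair S I).2) : x ∈ S ++ I := by
  have : x ∈ (ssPair S I).1 ++ (ssPair S I).2 := by simp [h]
  rw [ssPair_fst_append_snd] at this
  exact (ssAux_perm S I).mem_iff.mp this

theorem ssPair_max (T : List ℕ) (M : ℕ) (hT : ∀ x ∈ T, x < M) :
    ssPair [] (T ++ [M]) = (stackSort T, [M]) := by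
  rw [ssPair_append]
  have hs : ∀ t ∈ (ssPair [] T).2, t < M := by
    intro t ht
    exact hT t (by simpa using mem_ssPair_snd ht)
  rw [ssPair_single M _ hs]
  simp [stackSort, ssAux_eq_ssPair]

/-- The key one-pass step. -/
theorem stackSort_step (T : List ℕ) (M k : ℕ) (hT : ∀ x ∈ T, x < M) (hM : 1 ≤ M) :
    stackSort (T ++ M :: 1 :: List.range' (M + 1) k)
      = stackSort T ++ 1 :: List.range' M (k + 1) := by
  have hTM : ssPair [] (T ++ [M]) = (stackSort T, [M]) := ssPair_max T M hT
  have h1 : ssPair [M] [1] = ([], [1, M]) := ssPair_push M [] 1 (by omega)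
  have hsplit : T ++ M :: 1 :: List.range' (M + 1) k
      = (T ++ [M]) ++ [1] ++ List.range' (M + 1) k := by simp
  rw [stackSort, hsplit, ssAux_eq_ssPair, ssPair_append, ssPair_append, hTM, h1]
  cases k with
  | zero => simp [ssPair, List.range'_succ]
  | succ j =>
      have hlt : ∀ t ∈ [1, M], t < M + 1 := by intro t ht; simp at ht; omega
      rw [ssPair_range j (M + 1) [1, M] hlt]
      have hr : 1 :: List.range' M (j + 2)
          = [1, M] ++ List.range' (M + 1) j ++ [M + 1 + j] := by
        rw [List.range'_succ, List.range'_concat]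
        simp
      rw [hr]
      simp

/-- stack-sorting a permutation of `{2, ..., j+2}` puts the maximum last. -/
theorem stackSort_key {T : List ℕ} {j : ℕ} (h : T.Perm (List.range' 2 (j + 1))) :
    ∃ T' : List ℕ, T'.Perm (List.range' 2 j) ∧ stackSort T = T' ++ [j + 2] := by
  have hmem : (j + 2) ∈ T := h.mem_iff.mpr (by simp [List.mem_range'_1]; omega)
  obtain ⟨A, B, rfl⟩ := List.append_of_mem hmem
  have hnd : (A ++ (j + 2) :: B).Nodup := h.nodup_iff.mpr (List.nodup_range' ..)
  have hbound : ∀ x ∈ A ++ (j + 2) :: B, x < j + 3 := by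
    intro x hx
    have := h.mem_iff.mp hx
    simp [List.mem_range'_1] at this
    omega
  have hA : ∀ x ∈ A, x < j + 2 := by
    intro x hx
    have h1 : x < j + 3 := hbound x (by simp [hx])
    have h2 : x ≠ j + 2 := by
      intro heq; subst heq
      exact (List.disjoint_of_nodup_append hnd) hx (by simp)
    omega
  have hB : ∀ x ∈ B, x < j + 2 := by
    intro x hx
    have h1 : x < j + 3 := hbound x (by simp [hx])
    have h2 : x ≠ j + 2 := by
      intro heq; subst heq
      have := List.Nodup.of_append_right hnd
      simp at this
      exact this.1 hx
    omega
  -- compute stackSort (A ++ (j+2) :: B) = stackSort A ++ stackSort B ++ [j+2]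
  have hcalc : stackSort (A ++ (j + 2) :: B)
      = stackSort A ++ stackSort B ++ [j + 2] := by
    have hsplit : A ++ (j + 2) :: B = (A ++ [j + 2]) ++ B := by simp
    rw [stackSort, hsplit, ssAux_eq_ssPair, ssPair_append, ssPair_max A (j + 2) hA]
    have hb : ssPair ([] ++ [j + 2]) B = ((ssPair [] B).1, (ssPair [] B).2 ++ [j + 2]) :=
      ssPair_bottom (j + 2) [] B hB
    simp only [List.nil_append] at hb
    rw [hb]
    simp [stackSort, ssAux_eq_ssPair]
  refine ⟨stackSort A ++ stackSort B, ?_, hcalc⟩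
  -- permutation argument
  have hP : ((stackSort A ++ stackSort B) ++ [j + 2]).Perm (List.range' 2 j ++ [j + 2]) := by
    have h1 : (stackSort A ++ stackSort B).Perm (A ++ B) :=
      (stackSort_perm A).append (stackSort_perm B)
    have h2 : ((A ++ B) ++ [j + 2]).Perm (A ++ (j + 2) :: B) := by
      rw [List.append_assoc]
      exact List.Perm.append_left A
        (by simpa using (List.perm_middle (a := j + 2) (l₁ := B) (l₂ := ([] : List ℕ))))
    have h3 : List.range' 2 (j + 1) = List.range' 2 j ++ [j + 2] := by
      have e : 2 + 1 * j = j + 2 := by omega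
      rw [List.range'_concat, e]
    have h4 := h
    rw [h3] at h4
    exact ((h1.append_right [j + 2]).trans h2).trans h4
  exact (List.perm_append_right_iff [j + 2]).mp hP

/-- For `n ≥ 4` and `π = L ++ [n, 1] ∈ ℒⁿ`, the last three
stack-sorting iterates of `π` are `s^{n-3}(π) = 2 3 1 4 5 ⋯ n`,
`s^{n-2}(π) = 2 1 3 4 ⋯ n` and `s^{n-1}(π) = 1 2 3 ⋯ n`; in particular they
are the same for every `π ∈ ℒⁿ`. -/
theorem stackSort_Ln1_last_three_iterates (n : ℕ) (hn : 4 ≤ n) (L : List ℕ)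
    (hL : L.Perm (List.range' 2 (n - 2))) :
    stackSort^[n - 3] (L ++ [n, 1]) = 2 :: 3 :: 1 :: List.range' 4 (n - 3) ∧
    stackSort^[n - 2] (L ++ [n, 1]) = 2 :: 1 :: List.range' 3 (n - 2) ∧
    stackSort^[n - 1] (L ++ [n, 1]) = List.range' 1 n := by
  obtain ⟨m, rfl⟩ : ∃ m, n = m + 4 := ⟨n - 4, by omega⟩
  have e3 : m + 4 - 3 = m + 1 := by omega
  have e2 : m + 4 - 2 = m + 2 := by omega
  have e1 : m + 4 - 1 = m + 3 := by omega
  rw [e3, e2, e1]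
  rw [e2] at hL
  -- the invariant
  have INV : ∀ i j, i + j = m →
      ∃ T : List ℕ, T.Perm (List.range' 2 (j + 1)) ∧
        stackSort^[i + 1] (L ++ [m + 4, 1])
          = T ++ (j + 3) :: 1 :: List.range' (j + 4) (i + 1) := by
    intro i
    induction i with
    | zero =>
        intro j hj
        obtain rfl : m = j := by omega
        have hL' : L.Perm (List.range' 2 (m + 1 + 1)) := hL
        obtain ⟨T, hT, hsort⟩ := stackSort_key (j := m + 1) hL'
        refine ⟨T, hT, ?_⟩
        have hform : L ++ [m + 4, 1] = L ++ (m + 4) :: 1 :: List.range' (m + 4 + 1) 0 := by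
          simp
        have hLlt : ∀ x ∈ L, x < m + 4 := by
          intro x hx
          have := hL.mem_iff.mp hx
          simp [List.mem_range'_1] at this
          omega
        rw [Function.iterate_one, hform,
          stackSort_step L (m + 4) 0 hLlt (by omega), hsort]
        rw [show m + 1 + 2 = m + 3 from rfl]
        simp
    | succ i ih =>
        intro j hj
        obtain ⟨T, hT, hsort⟩ := ih (j + 1) (by omega)
        obtain ⟨T', hT', hsort'⟩ := stackSort_key (j := j + 1) hT
        refine ⟨T', hT', ?_⟩
        have hTlt : ∀ x ∈ T, x < j + 4 := by
          intro x hx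
          have := hT.mem_iff.mp hx
          simp [List.mem_range'_1] at this
          omega
        rw [show j + 1 + 3 = j + 4 from rfl, show j + 1 + 4 = j + 4 + 1 from rfl] at hsort
        rw [Function.iterate_succ_apply', hsort,
          stackSort_step T (j + 4) (i + 1) hTlt (by omega), hsort']
        rw [show j + 1 + 2 = j + 3 from rfl]
        simp
  obtain ⟨T, hT, hsort⟩ := INV m 0 (by omega)
  have hT2 : T = [2] := List.perm_singleton.mp (by simpa using hT)
  subst hT2
  have g1 : stackSort^[m + 1] (L ++ [m + 4, 1]) = 2 :: 3 :: 1 :: List.range' 4 (m + 1) := by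
    simpa using hsort
  refine ⟨g1, ?_, ?_⟩
  · -- second iterate
    rw [show m + 2 = (m + 1) + 1 by omega, Function.iterate_succ_apply', g1]
    have hform : (2 : ℕ) :: 3 :: 1 :: List.range' 4 (m + 1)
        = [2] ++ 3 :: 1 :: List.range' (3 + 1) (m + 1) := by simp
    rw [hform, stackSort_step [2] 3 (m + 1) (by simp) (by omega)]
    have h2 : stackSort [2] = [2] := by
      rw [stackSort, ssAux, ssAux]
    rw [h2]
    rfl
  · -- third iterate
    rw [show m + 3 = (m + 1) + 1 + 1 by omega, Function.iterate_succ_apply',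
      Function.iterate_succ_apply', g1]
    have hform : (2 : ℕ) :: 3 :: 1 :: List.range' 4 (m + 1)
        = [2] ++ 3 :: 1 :: List.range' (3 + 1) (m + 1) := by simp
    rw [hform, stackSort_step [2] 3 (m + 1) (by simp) (by omega)]
    have h2 : stackSort [2] = [2] := by rw [stackSort, ssAux, ssAux]
    rw [h2]
    have hform2 : ([2] : List ℕ) ++ 1 :: List.range' 3 (m + 1 + 1)
        = ([] : List ℕ) ++ 2 :: 1 :: List.range' (2 + 1) (m + 2) := by simp
    rw [hform2, stackSort_step [] 2 (m + 2) (by simp) (by omega)]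
    have h0 : stackSort [] = [] := by rw [stackSort, ssAux]
    rw [h0]
    have hr1 : List.range' 1 (m + 4) = 1 :: List.range' 2 (m + 3) := List.range'_succ ..
    rw [hr1]
    simp
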